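/- arXiv:1504.03313 — 4 statements merged into one kernel-verified Lean document; each statement's English description precedes it below -/
import Mathlib

section
/- Let f and g be formal (or analytic) germs fixing 0 of the form f(z) = z + a z^{p+1} + o(z^{p+1}) and g(z) = z + b z^{q+1} + o(z^{q+1}) with p, q ≥ 1. Then the commutator [f,g] := f ∘ g ∘ f⁻¹ ∘ g⁻¹ satisfies [f,g](z) = z + a b (p − q) z^{p+q+1} + o(z^{p+q+1}). -/
/-!
Put `v = f⁻¹ (g⁻¹ z)`. Since `g (f v) = z`, we have `[f,g](z) - z = f (g v) - g (f v)` with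
`v ~ z`, so no inverse has to be expanded. Write `f x = x + x ^ (p + 1) F x` and
`g x = x + x ^ (q + 1) G x` with `F`, `G` analytic, `F 0 = a`, `G 0 = b`. With
`ψ x = x ^ (p + 1) F x` and `χ x = x ^ (q + 1) G x`,
`f (g x) - g (f x) = (ψ (g x) - ψ x) - (χ (f x) - χ x)`. To first order
`ψ (g x) - ψ x ≈ ψ' x · (g x - x) ≈ (p + 1) a x ^ p · b x ^ (q + 1)`, and likewise
`χ (f x) - χ x ≈ (q + 1) a b x ^ (p + q + 1)`; the errors are `O(x ^ (p + q + 2))` because `p, q ≥ 1`.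
-/

open Filter Asymptotics

/-- Two germs are local inverses of each other near `0`. -/
def LocalInv (f f' : ℂ → ℂ) : Prop :=
  (∀ᶠ z in nhds (0:ℂ), f' (f z) = z) ∧ (∀ᶠ z in nhds (0:ℂ), f (f' z) = z)

open Topology

section

variable {𝕜 : Type*} [NontriviallyNormedField 𝕜]

theorem isBigO_pow_pow_of_le {m n : ℕ} (h : m ≤ n) :
    (fun x : 𝕜 => x ^ n) =O[𝓝 0] fun x => x ^ m := by
  rcases h.eq_or_lt with rfl | h
  · exact isBigO_refl _ _
  · exact (isLittleO_pow_pow h).isBigO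

theorem natCast_lt_analyticOrderAt_of_isLittleO {E : Type*} [NormedAddCommGroup E]
    [NormedSpace 𝕜 E] {h : 𝕜 → E} {z₀ : 𝕜} {n : ℕ}
    (hh : AnalyticAt 𝕜 h z₀) (ho : h =o[𝓝 z₀] fun z => (z - z₀) ^ n) :
    (n : ℕ∞) < analyticOrderAt h z₀ := by
  by_contra hle
  push Not at hle
  lift analyticOrderAt h z₀ to ℕ using (hle.trans_lt (ENat.natCast_lt_top n)).ne with m hm
  obtain ⟨G, hGa, hG0, hG⟩ := hh.analyticOrderAt_eq_natCast.mp hm.symm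
  have hsub : Tendsto (fun z => z - z₀) (𝓝 z₀) (𝓝 0) := tendsto_sub_nhds_zero_iff.mpr tendsto_id
  have hom : h =o[𝓝[≠] z₀] fun z => (z - z₀) ^ m :=
    (ho.trans_isBigO ((isBigO_pow_pow_of_le (by exact_mod_cast hle)).comp_tendsto hsub)).mono
      nhdsWithin_le_nhds
  have hGh : (fun z => ((z - z₀) ^ m)⁻¹ • h z) =ᶠ[𝓝[≠] z₀] G := by
    filter_upwards [self_mem_nhdsWithin, hG.filter_mono nhdsWithin_le_nhds] with z hz hGz
    rw [hGz, smul_smul, inv_mul_cancel₀ (pow_ne_zero _ (sub_ne_zero.mpr hz)), one_smul]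
  have hone : (fun z => ((z - z₀) ^ m)⁻¹ • (z - z₀) ^ m) =ᶠ[𝓝[≠] z₀] fun _ => (1 : 𝕜) := by
    filter_upwards [self_mem_nhdsWithin] with z hz
    exact inv_mul_cancel₀ (pow_ne_zero _ (sub_ne_zero.mpr hz))
  have hG_zero : Tendsto G (𝓝[≠] z₀) (𝓝 0) :=
    (isLittleO_one_iff 𝕜).mp (((isBigO_refl _ _).smul_isLittleO hom).congr' hGh hone)
  exact hG0 (tendsto_nhds_unique hGa.continuousAt.continuousWithinAt.tendsto hG_zero)

theorem AnalyticAt.exists_eventuallyEq_add_pow_mul {f : 𝕜 → 𝕜} {a : 𝕜} {p : ℕ}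
    (hfa : AnalyticAt 𝕜 f 0)
    (hf : (fun z => f z - (z + a * z ^ (p + 1))) =o[𝓝 0] fun z => z ^ (p + 1)) :
    ∃ F : 𝕜 → 𝕜, AnalyticAt 𝕜 F 0 ∧ F 0 = a ∧ f =ᶠ[𝓝 0] fun z => z + z ^ (p + 1) * F z := by
  have hr : AnalyticAt 𝕜 (fun z => f z - (z + a * z ^ (p + 1))) 0 := by fun_prop
  have hord := natCast_lt_analyticOrderAt_of_isLittleO hr (by simpa using hf)
  obtain ⟨R, hRa, hR⟩ := (natCast_le_analyticOrderAt hr (n := p + 2)).mp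
    (by exact_mod_cast Order.add_one_le_of_lt hord)
  refine ⟨fun z => a + z * R z, by fun_prop, by simp, ?_⟩
  filter_upwards [hR] with z hz
  simp only [sub_zero, smul_eq_mul] at hz
  linear_combination hz

theorem HasStrictDerivAt.isBigO_comp_sub_comp {F : 𝕜 → 𝕜} {F' x₀ : 𝕜}
    (hF : HasStrictDerivAt F F' x₀) {α : Type*} {l : Filter α} {u v : α → 𝕜}
    (hu : Tendsto u l (𝓝 x₀)) (hv : Tendsto v l (𝓝 x₀)) :
    (fun t => F (u t) - F (v t)) =O[l] fun t => u t - v t :=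
  hF.hasStrictFDerivAt.isBigO_sub.comp_tendsto (hu.prodMk_nhds hv)

theorem isBigO_one_add_pow_sub_sub (n : ℕ) :
    (fun t : 𝕜 => (1 + t) ^ n - 1 - n * t) =O[𝓝 0] fun t => t ^ 2 := by
  induction n with
  | zero => simpa using isBigO_zero _ _
  | succ n ih =>
    have h1 : (fun t : 𝕜 => 1 + t) =O[𝓝 0] fun _ => (1 : 𝕜) :=
      (tendsto_const_nhds.add tendsto_id).isBigO_one 𝕜
    refine ((h1.mul ih).add ((isBigO_refl _ _).const_mul_left (n : 𝕜))).congr' ?_ ?_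
    · exact Eventually.of_forall fun t => by push_cast; ring
    · exact Eventually.of_forall fun t => by simp

theorem ContinuousAt.isBigO_pow_mul {F : 𝕜 → 𝕜} (hF : ContinuousAt F 0) (k : ℕ) :
    (fun x => x ^ k * F x) =O[𝓝 0] fun x => x ^ k := by
  simpa using (isBigO_refl (fun x : 𝕜 => x ^ k) _).mul (hF.tendsto.isBigO_one 𝕜)

theorem isEquivalent_id_of_eventuallyEq_add_pow_mul {f F : 𝕜 → 𝕜} {n : ℕ} (hn : 1 ≤ n)
    (hF : ContinuousAt F 0) (hf : f =ᶠ[𝓝 0] fun x => x + x ^ (n + 1) * F x) : f ~[𝓝 0] id := by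
  have hrem : (fun x => x ^ (n + 1) * F x) =o[𝓝 0] fun x => x :=
    (hF.isBigO_pow_mul _).trans_isLittleO (isLittleO_pow_id (by omega))
  refine hrem.congr' ?_ EventuallyEq.rfl
  filter_upwards [hf] with x hx
  simp [hx]

theorem isBigO_pow_mul_comp_add_pow_mul_sub {F G : 𝕜 → 𝕜} {F' : 𝕜} {m n : ℕ} (hn : 1 ≤ n)
    (hF : HasStrictDerivAt F F' 0) (hG : DifferentiableAt 𝕜 G 0) :
    (fun x => (x + x ^ (n + 1) * G x) ^ (m + 1) * F (x + x ^ (n + 1) * G x) - x ^ (m + 1) * F x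
        - (m + 1) * F 0 * G 0 * x ^ (m + n + 1)) =O[𝓝 0] fun x => x ^ (m + n + 2) := by
  set y : 𝕜 → 𝕜 := fun x => x + x ^ (n + 1) * G x
  set t : 𝕜 → 𝕜 := fun x => x ^ n * G x
  have hy_id : y ~[𝓝 0] id :=
    isEquivalent_id_of_eventuallyEq_add_pow_mul hn hG.continuousAt EventuallyEq.rfl
  have hy0 : Tendsto y (𝓝 0) (𝓝 0) := hy_id.symm.tendsto_nhds tendsto_id
  have htO : t =O[𝓝 0] fun x => x ^ n := hG.continuousAt.isBigO_pow_mul n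
  have ht0 : Tendsto t (𝓝 0) (𝓝 0) :=
    htO.trans_tendsto ((continuous_pow n).tendsto' 0 0 (zero_pow (by omega)))
  have hFy : (fun x => F (y x)) =O[𝓝 0] fun _ => (1 : 𝕜) :=
    (hF.hasDerivAt.continuousAt.tendsto.comp hy0).isBigO_one 𝕜
  have hpow : (fun x => ((1 + t x) ^ (m + 1) - 1 - (m + 1 : ℕ) * t x) * F (y x))
      =O[𝓝 0] fun x => x ^ (n + 1) := by
    have := (((isBigO_one_add_pow_sub_sub (m + 1)).comp_tendsto ht0).trans (htO.pow 2)).mul hFy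
    simp only [mul_one, ← pow_mul] at this
    exact this.trans (isBigO_pow_pow_of_le (by omega))
  have hFyx : (fun x => F (y x) - F x) =O[𝓝 0] fun x => x ^ (n + 1) :=
    (hF.isBigO_comp_sub_comp hy0 tendsto_id).trans
      (by simpa [y] using hG.continuousAt.isBigO_pow_mul (n + 1))
  have hFy0 : (fun x => t x * (F (y x) - F 0)) =O[𝓝 0] fun x => x ^ (n + 1) := by
    have := htO.mul
      ((hF.isBigO_comp_sub_comp hy0 tendsto_const_nhds).trans (by simpa using hy_id.isBigO))
    simpa [pow_succ] using this
  have hG0 : (fun x => x ^ n * (G x - G 0)) =O[𝓝 0] fun x => x ^ (n + 1) := by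
    have := (isBigO_refl (fun x : 𝕜 => x ^ n) _).mul hG.hasDerivAt.isBigO_sub
    simpa [pow_succ] using this
  -- `y x = x * (1 + t x)`, so the expression is `x ^ (m + 1)` times the sum of the four terms
  have hsum := (isBigO_refl (fun x : 𝕜 => x ^ (m + 1)) _).mul
    (((hpow.add hFyx).add (hFy0.const_mul_left (m + 1 : 𝕜))).add
      (hG0.const_mul_left ((m + 1) * F 0)))
  refine hsum.congr' (Eventually.of_forall fun x => ?_) (Eventually.of_forall fun x => ?_)
  · have hyx : x + x ^ (n + 1) * G x = x * (1 + x ^ n * G x) := by ring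
    simp only [y, t, hyx, mul_pow]
    push_cast
    ring
  · simp only; ring

theorem isBigO_comp_sub_comp_sub_pow {f g F G : 𝕜 → 𝕜} {F' G' : 𝕜} {p q : ℕ}
    (hp : 1 ≤ p) (hq : 1 ≤ q) (hF : HasStrictDerivAt F F' 0) (hG : HasStrictDerivAt G G' 0)
    (hf : f =ᶠ[𝓝 0] fun x => x + x ^ (p + 1) * F x)
    (hg : g =ᶠ[𝓝 0] fun x => x + x ^ (q + 1) * G x) :
    (fun x => f (g x) - g (f x) - F 0 * G 0 * (p - q) * x ^ (p + q + 1))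
      =O[𝓝 0] fun x => x ^ (p + q + 2) := by
  have hf0 : Tendsto f (𝓝 0) (𝓝 0) :=
    (isEquivalent_id_of_eventuallyEq_add_pow_mul hp hF.hasDerivAt.continuousAt hf).symm.tendsto_nhds
      tendsto_id
  have hg0 : Tendsto g (𝓝 0) (𝓝 0) :=
    (isEquivalent_id_of_eventuallyEq_add_pow_mul hq hG.hasDerivAt.continuousAt hg).symm.tendsto_nhds
      tendsto_id
  have hfg := isBigO_pow_mul_comp_add_pow_mul_sub (m := p) hq hF hG.hasDerivAt.differentiableAt
  have hgf := isBigO_pow_mul_comp_add_pow_mul_sub (m := q) hp hG hF.hasDerivAt.differentiableAt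
  rw [show q + p + 2 = p + q + 2 by omega] at hgf
  refine (hfg.sub hgf).congr' ?_ EventuallyEq.rfl
  filter_upwards [hf, hg, hg0.eventually hf, hf0.eventually hg] with x hfx hgx hfgx hgfx
  rw [hfgx, hgfx, hgx, hfx]
  ring

end

theorem LocalInv.isEquivalent_id {f fi : ℂ → ℂ} (h : LocalInv f fi) (hf : f ~[𝓝 0] id)
    (hf0 : f 0 = 0) (hfi : ContinuousAt fi 0) : fi ~[𝓝 0] id := by
  have hfi0 : fi 0 = 0 := by simpa [hf0] using h.1.self_of_nhds
  exact ((hf.comp_tendsto (by simpa [hfi0] using hfi.tendsto)).congr_left h.2).symm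

/-- If `f(z) = z + a z^(p+1) + o(z^(p+1))` and
`g(z) = z + b z^(q+1) + o(z^(q+1))` are parabolic germs, then their commutator
`[f,g] = f ∘ g ∘ f⁻¹ ∘ g⁻¹` satisfies
`[f,g](z) = z + a b (p-q) z^(p+q+1) + o(z^(p+q+1))`. -/
theorem commutator_leading_term
    (f g fi gi : ℂ → ℂ) (a b : ℂ) (p q : ℕ) (hp : 1 ≤ p) (hq : 1 ≤ q)
    (hfa : AnalyticAt ℂ f 0) (hga : AnalyticAt ℂ g 0)
    (hfia : AnalyticAt ℂ fi 0) (hgia : AnalyticAt ℂ gi 0)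
    (hf0 : f 0 = 0) (hg0 : g 0 = 0)
    (hfi : LocalInv f fi) (hgi : LocalInv g gi)
    (hf : (fun z => f z - (z + a * z ^ (p + 1))) =o[nhds 0] fun z => z ^ (p + 1))
    (hg : (fun z => g z - (z + b * z ^ (q + 1))) =o[nhds 0] fun z => z ^ (q + 1)) :
    (fun z => f (g (fi (gi z))) - (z + a * b * ((p : ℂ) - q) * z ^ (p + q + 1)))
      =o[nhds 0] fun z => z ^ (p + q + 1) := by
  obtain ⟨F, hFa, rfl, hfF⟩ := hfa.exists_eventuallyEq_add_pow_mul hf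
  obtain ⟨G, hGa, rfl, hgG⟩ := hga.exists_eventuallyEq_add_pow_mul hg
  have hfi_id := hfi.isEquivalent_id
    (isEquivalent_id_of_eventuallyEq_add_pow_mul hp hFa.continuousAt hfF) hf0 hfia.continuousAt
  have hgi_id := hgi.isEquivalent_id
    (isEquivalent_id_of_eventuallyEq_add_pow_mul hq hGa.continuousAt hgG) hg0 hgia.continuousAt
  have hgi0 : Tendsto gi (𝓝 0) (𝓝 0) := hgi_id.symm.tendsto_nhds tendsto_id
  have hv : (fun z => fi (gi z)) ~[𝓝 0] id := (hfi_id.comp_tendsto hgi0).trans hgi_id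
  have hcomm := (((isBigO_comp_sub_comp_sub_pow hp hq hFa.hasStrictDerivAt hGa.hasStrictDerivAt
    hfF hgG).trans_isLittleO (isLittleO_pow_pow (by omega : p + q + 1 < p + q + 2))).comp_tendsto
    (hv.symm.tendsto_nhds tendsto_id)).trans_isBigO (hv.pow (p + q + 1)).isBigO
  have hpow := (hv.pow (p + q + 1)).isLittleO.const_mul_left (F 0 * G 0 * ((p : ℂ) - q))
  refine (hcomm.add hpow).congr' ?_ EventuallyEq.rfl
  filter_upwards [hgi0.eventually hfi.2, hgi.2] with z hfz hgz
  simp only [Function.comp, Pi.pow_apply, Pi.sub_apply, id, hfz, hgz]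
  ring
end

section
/- Let f, g be analytic germs fixing 0 with f'(0)² ≠ 1 and g'(0)² ≠ 1. Then the Schwarzian derivative of their commutator at 0 satisfies S([f,g])(0) = (S(f)(0)/(f'(0)² − 1) − S(g)(0)/(g'(0)² − 1)) · (1 − f'(0)^{−2}) · (1 − g'(0)^{−2}). -/
open Filter Asymptotics

/-- The Schwarzian derivative `S(h) = h'''/h' - (3/2)(h''/h')²`. -/
noncomputable def Schw (h : ℂ → ℂ) (z : ℂ) : ℂ :=
  iteratedDeriv 3 h z / deriv h z - (3 / 2) * (iteratedDeriv 2 h z / deriv h z) ^ 2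

/-!
The Schwarzian derivative is a cocycle: `S(u ∘ v) = (S(u) ∘ v) · v'² + S(v)`, and `S(id) = 0`.
Hence `S(f⁻¹)(0) = -S(f)(0) / a²` with `a = f'(0)`, and unwinding the cocycle along
`f ∘ g ∘ f⁻¹ ∘ g⁻¹`, with `b = g'(0)`, gives `S(f)(0)/a² · (1 - b⁻²) - S(g)(0)/b² · (1 - a⁻²)`,
which is the claimed expression once `1 - a⁻² = (a² - 1)/a²` is factored out.
-/

open Topology

section Deriv

variable {𝕜 : Type*} [NontriviallyNormedField 𝕜]

theorem iteratedDeriv_two_eq_deriv_deriv {F : Type*} [NormedAddCommGroup F] [NormedSpace 𝕜 F]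
    (h : 𝕜 → F) : iteratedDeriv 2 h = deriv (deriv h) := by
  simp [iteratedDeriv_eq_iterate]

theorem iteratedDeriv_three_eq_deriv_deriv_deriv {F : Type*} [NormedAddCommGroup F]
    [NormedSpace 𝕜 F] (h : 𝕜 → F) : iteratedDeriv 3 h = deriv (deriv (deriv h)) := by
  simp [iteratedDeriv_eq_iterate]

theorem deriv_mul_deriv_eq_one_of_leftInverse {f fi : 𝕜 → 𝕜} {z : 𝕜}
    (hfi : DifferentiableAt 𝕜 fi (f z)) (hf : DifferentiableAt 𝕜 f z) (h : fi ∘ f =ᶠ[𝓝 z] id) :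
    deriv fi (f z) * deriv f z = 1 := by
  rw [← deriv_comp z hfi hf, h.deriv_eq, deriv_id]

variable [CompleteSpace 𝕜] {u v : 𝕜 → 𝕜} {z : 𝕜}

theorem deriv_deriv_comp (hu : AnalyticAt 𝕜 u (v z)) (hv : AnalyticAt 𝕜 v z) :
    deriv (deriv (u ∘ v)) z =
      deriv (deriv u) (v z) * deriv v z ^ 2 + deriv u (v z) * deriv (deriv v) z := by
  have hcomp : deriv (u ∘ v) =ᶠ[𝓝 z] fun w => deriv u (v w) * deriv v w := by
    filter_upwards [hv.continuousAt.eventually hu.eventually_analyticAt,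
      hv.eventually_analyticAt] with w huw hvw
    exact deriv_comp w huw.differentiableAt hvw.differentiableAt
  have hu' : HasDerivAt (fun w => deriv u (v w)) (deriv (deriv u) (v z) * deriv v z) z :=
    hu.deriv.differentiableAt.hasDerivAt.comp z hv.differentiableAt.hasDerivAt
  rw [hcomp.deriv_eq, (hu'.fun_mul hv.deriv.differentiableAt.hasDerivAt).deriv]
  ring

theorem deriv_deriv_deriv_comp (hu : AnalyticAt 𝕜 u (v z)) (hv : AnalyticAt 𝕜 v z) :
    deriv (deriv (deriv (u ∘ v))) z =
      deriv (deriv (deriv u)) (v z) * deriv v z ^ 3 +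
        3 * deriv (deriv u) (v z) * deriv v z * deriv (deriv v) z +
        deriv u (v z) * deriv (deriv (deriv v)) z := by
  have hcomp : deriv (deriv (u ∘ v)) =ᶠ[𝓝 z] fun w =>
      deriv (deriv u) (v w) * deriv v w ^ 2 + deriv u (v w) * deriv (deriv v) w := by
    filter_upwards [hv.continuousAt.eventually hu.eventually_analyticAt,
      hv.eventually_analyticAt] with w huw hvw
    exact deriv_deriv_comp huw hvw
  have hv' := hv.differentiableAt.hasDerivAt
  have hu₁ := hu.deriv.differentiableAt.hasDerivAt.comp z hv'
  have hu₂ := hu.deriv.deriv.differentiableAt.hasDerivAt.comp z hv'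
  have hv₁ := hv.deriv.differentiableAt.hasDerivAt
  have hv₂ := hv.deriv.deriv.differentiableAt.hasDerivAt
  rw [hcomp.deriv_eq]
  refine ((hu₂.fun_mul (hv₁.fun_pow 2)).fun_add (hu₁.fun_mul hv₂)).deriv.trans ?_
  simp only [Function.comp_apply, Nat.cast_ofNat]
  ring

end Deriv

theorem schw_congr {u w : ℂ → ℂ} {z : ℂ} (h : u =ᶠ[𝓝 z] w) : Schw u z = Schw w z := by
  simp only [Schw, h.iteratedDeriv_eq, h.deriv_eq]

theorem schw_id (z : ℂ) : Schw id z = 0 := by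
  simp [Schw, iteratedDeriv_eq_iterate]

theorem schw_comp {u v : ℂ → ℂ} {z : ℂ} (hu : AnalyticAt ℂ u (v z)) (hv : AnalyticAt ℂ v z)
    (hu' : deriv u (v z) ≠ 0) (hv' : deriv v z ≠ 0) :
    Schw (u ∘ v) z = Schw u (v z) * deriv v z ^ 2 + Schw v z := by
  simp only [Schw, iteratedDeriv_two_eq_deriv_deriv, iteratedDeriv_three_eq_deriv_deriv_deriv]
  rw [deriv_comp z hu.differentiableAt hv.differentiableAt, deriv_deriv_comp hu hv,
    deriv_deriv_deriv_comp hu hv]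
  field_simp
  ring

theorem schw_of_leftInverse {f fi : ℂ → ℂ} {z : ℂ} (hfi : AnalyticAt ℂ fi (f z))
    (hf : AnalyticAt ℂ f z) (h : fi ∘ f =ᶠ[𝓝 z] id) :
    Schw fi (f z) = -Schw f z / deriv f z ^ 2 := by
  have hd := deriv_mul_deriv_eq_one_of_leftInverse hfi.differentiableAt hf.differentiableAt h
  have hS := schw_comp hfi hf (left_ne_zero_of_mul_eq_one hd) (right_ne_zero_of_mul_eq_one hd)
  rw [schw_congr h, schw_id] at hS
  field_simp [right_ne_zero_of_mul_eq_one hd]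
  linear_combination -hS

/-- `u` represents an element of the group `Diff(ℂ, 0)` of germs of local biholomorphisms
fixing `0`. -/
structure IsDiffGerm (u : ℂ → ℂ) : Prop where
  analyticAt : AnalyticAt ℂ u 0
  map_zero : u 0 = 0
  deriv_ne_zero : deriv u 0 ≠ 0

namespace IsDiffGerm

variable {u v f fi : ℂ → ℂ}

theorem analyticAt_map (hu : IsDiffGerm u) (hv : IsDiffGerm v) : AnalyticAt ℂ u (v 0) := by
  rw [hv.map_zero]
  exact hu.analyticAt

theorem deriv_comp (hu : IsDiffGerm u) (hv : IsDiffGerm v) :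
    deriv (u ∘ v) 0 = deriv u 0 * deriv v 0 := by
  rw [_root_.deriv_comp 0 (hu.analyticAt_map hv).differentiableAt hv.analyticAt.differentiableAt,
    hv.map_zero]

theorem comp (hu : IsDiffGerm u) (hv : IsDiffGerm v) : IsDiffGerm (u ∘ v) where
  analyticAt := (hu.analyticAt_map hv).comp hv.analyticAt
  map_zero := by simp [hv.map_zero, hu.map_zero]
  deriv_ne_zero := by rw [hu.deriv_comp hv]; exact mul_ne_zero hu.deriv_ne_zero hv.deriv_ne_zero

theorem schw_comp (hu : IsDiffGerm u) (hv : IsDiffGerm v) :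
    Schw (u ∘ v) 0 = Schw u 0 * deriv v 0 ^ 2 + Schw v 0 := by
  rw [_root_.schw_comp (hu.analyticAt_map hv) hv.analyticAt
    (by rw [hv.map_zero]; exact hu.deriv_ne_zero) hv.deriv_ne_zero, hv.map_zero]

theorem of_leftInverse (hf : AnalyticAt ℂ f 0) (hfi : AnalyticAt ℂ fi 0) (hf0 : f 0 = 0)
    (h : fi ∘ f =ᶠ[𝓝 0] id) : IsDiffGerm f ∧ IsDiffGerm fi := by
  have hd := deriv_mul_deriv_eq_one_of_leftInverse (by rw [hf0]; exact hfi.differentiableAt)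
    hf.differentiableAt h
  rw [hf0] at hd
  refine ⟨⟨hf, hf0, right_ne_zero_of_mul_eq_one hd⟩, ⟨hfi, ?_, left_ne_zero_of_mul_eq_one hd⟩⟩
  simpa [hf0] using h.eq_of_nhds

theorem deriv_eq_inv_of_leftInverse (hf : IsDiffGerm f) (hfi : IsDiffGerm fi)
    (h : fi ∘ f =ᶠ[𝓝 0] id) : deriv fi 0 = (deriv f 0)⁻¹ := by
  have hd := deriv_mul_deriv_eq_one_of_leftInverse (hfi.analyticAt_map hf).differentiableAt
    hf.analyticAt.differentiableAt h
  rw [hf.map_zero] at hd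
  exact eq_inv_of_mul_eq_one_left hd

theorem schw_of_leftInverse (hf : IsDiffGerm f) (hfi : IsDiffGerm fi) (h : fi ∘ f =ᶠ[𝓝 0] id) :
    Schw fi 0 = -Schw f 0 / deriv f 0 ^ 2 := by
  simpa only [hf.map_zero] using _root_.schw_of_leftInverse (hfi.analyticAt_map hf) hf.analyticAt h

end IsDiffGerm

/-- For analytic germs `f, g` fixing `0` with `f'(0)² ≠ 1`,
`g'(0)² ≠ 1`, the Schwarzian derivative of the commutator
`[f,g] = f ∘ g ∘ f⁻¹ ∘ g⁻¹` at `0` equals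
`(S(f)(0)/(f'(0)²-1) - S(g)(0)/(g'(0)²-1)) (1 - f'(0)⁻²)(1 - g'(0)⁻²)`. -/
theorem schwarzian_of_commutator
    (f g fi gi : ℂ → ℂ)
    (hfa : AnalyticAt ℂ f 0) (hga : AnalyticAt ℂ g 0)
    (hfia : AnalyticAt ℂ fi 0) (hgia : AnalyticAt ℂ gi 0)
    (hf0 : f 0 = 0) (hg0 : g 0 = 0)
    (hf1 : (deriv f 0) ^ 2 ≠ 1) (hg1 : (deriv g 0) ^ 2 ≠ 1)
    (hfi : LocalInv f fi) (hgi : LocalInv g gi) :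
    Schw (fun z => f (g (fi (gi z)))) 0 =
      (Schw f 0 / ((deriv f 0) ^ 2 - 1) - Schw g 0 / ((deriv g 0) ^ 2 - 1)) *
        (1 - ((deriv f 0) ^ 2)⁻¹) * (1 - ((deriv g 0) ^ 2)⁻¹) := by
  obtain ⟨hF, hFi⟩ := IsDiffGerm.of_leftInverse hfa hfia hf0 hfi.1
  obtain ⟨hG, hGi⟩ := IsDiffGerm.of_leftInverse hga hgia hg0 hgi.1
  have hcomm : Schw (f ∘ g ∘ fi ∘ gi) 0 =
      Schw f 0 * (deriv g 0 * (deriv fi 0 * deriv gi 0)) ^ 2 +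
        Schw g 0 * (deriv fi 0 * deriv gi 0) ^ 2 + Schw fi 0 * deriv gi 0 ^ 2 + Schw gi 0 := by
    rw [hF.schw_comp (hG.comp (hFi.comp hGi)), hG.schw_comp (hFi.comp hGi), hFi.schw_comp hGi,
      hG.deriv_comp (hFi.comp hGi), hFi.deriv_comp hGi]
    ring
  rw [show (fun z => f (g (fi (gi z)))) = f ∘ g ∘ fi ∘ gi from rfl, hcomm,
    hF.schw_of_leftInverse hFi hfi.1, hG.schw_of_leftInverse hGi hgi.1,
    hF.deriv_eq_inv_of_leftInverse hFi hfi.1, hG.deriv_eq_inv_of_leftInverse hGi hgi.1]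
  field_simp [hF.deriv_ne_zero, hG.deriv_ne_zero, sub_ne_zero.mpr hf1, sub_ne_zero.mpr hg1]
  ring
end

section
/- Let c₁, …, c_n be cycles whose multipliers μ(c_j) ∈ ℂ satisfy 0 < |μ(c_j)| < |μ(c₁) ⋯ μ(c_{j−1})| for every j (in particular |μ(c₁)| < 1). Then for any nonempty finite set of indices i₁ < i₂ < … < i_s and any signs ε₁, …, ε_s ∈ {±1}, the relation μ(c_{i₁})^{ε₁} ⋯ μ(c_{i_{s−1}})^{ε_{s−1}} = μ(c_{i_s}) is impossible. -/
/-!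
The hypothesis forces every modulus below 1 (by strong induction). Hence deleting factors from
`∏_{k < i_s} |μ k|` and inverting some of the remaining ones can only increase it, so
`|μ(i_s)| < ∏_{k < i_s} |μ k| ≤ ∏_t |μ(i_t)|^{ε_t}`, and the two sides of the relation differ in modulus.
-/

open Finset

section OrderedMonoidWithZero

variable {R : Type*} [CommMonoidWithZero R] [PartialOrder R] [ZeroLEOneClass R] [PosMulMono R]

theorem lt_one_of_lt_prod_range {f : ℕ → R} (h0 : ∀ j, 0 ≤ f j)
    (hlt : ∀ j, f j < ∏ k ∈ range j, f k) (j : ℕ) : f j < 1 := by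
  induction j using Nat.strong_induction_on with
  | _ j ih =>
    exact (hlt j).trans_le <|
      prod_le_one (fun k _ => h0 k) fun k hk => (ih k (mem_range.mp hk)).le

theorem prod_range_le_prod_comp {ι : Type*} [Fintype ι] {f : ℕ → R} (h0 : ∀ k, 0 ≤ f k)
    (h1 : ∀ k, f k ≤ 1) {g : ι → ℕ} (hg : Function.Injective g) {n : ℕ} (hgn : ∀ t, g t < n) :
    ∏ k ∈ range n, f k ≤ ∏ t, f (g t) := by
  classical
  rw [← prod_image fun a _ b _ hab => hg hab]
  refine prod_le_prod_of_subset_of_le_one ?_ (fun k _ => h0 k) fun k _ _ => h1 k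
  rintro _ hk
  obtain ⟨t, -, rfl⟩ := mem_image.mp hk
  exact mem_range.mpr (hgn t)

end OrderedMonoidWithZero

theorem self_le_zpow_of_le_one {K : Type*} [Field K] [LinearOrder K] [IsStrictOrderedRing K]
    {x : K} (h0 : 0 ≤ x) (h1 : x ≤ 1) {n : ℤ} (hn : n ≤ 1) : x ≤ x ^ n := by
  rcases h0.eq_or_lt with rfl | hpos
  · exact zpow_nonneg le_rfl n
  · simpa using zpow_le_zpow_right_of_le_one₀ hpos h1 hn

theorem multiplier_relation_impossible_general
    (μ : ℕ → ℂ)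
    (hlt : ∀ j, ‖μ j‖ < ∏ k ∈ Finset.range j, ‖μ k‖)
    (s : ℕ) (i : Fin (s + 1) → ℕ) (hi : StrictMono i)
    (ε : Fin s → ℤ) (hε : ∀ t, ε t = 1 ∨ ε t = -1) :
    ∏ t : Fin s, μ (i t.castSucc) ^ (ε t) ≠ μ (i (Fin.last s)) := by
  intro h
  have hle_one (j : ℕ) : ‖μ j‖ ≤ 1 :=
    (lt_one_of_lt_prod_range (fun _ => norm_nonneg _) hlt j).le
  have hε_le (t : Fin s) : ε t ≤ 1 := by rcases hε t with h | h <;> omega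
  refine (hlt (i (Fin.last s))).not_ge ?_
  calc ∏ k ∈ range (i (Fin.last s)), ‖μ k‖
      ≤ ∏ t : Fin s, ‖μ (i t.castSucc)‖ :=
        prod_range_le_prod_comp (fun _ => norm_nonneg _) hle_one
          (hi.injective.comp (Fin.castSucc_injective s)) fun t => hi (Fin.castSucc_lt_last t)
    _ ≤ ∏ t : Fin s, ‖μ (i t.castSucc)‖ ^ ε t :=
        prod_le_prod (fun _ _ => norm_nonneg _) fun t _ =>
          self_le_zpow_of_le_one (norm_nonneg _) (hle_one _) (hε_le t)
    _ = ‖μ (i (Fin.last s))‖ := by rw [← h, norm_prod]; simp only [norm_zpow]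

/-- Lemma 9, multiplier inequality: let `μ j` (`j = 0, 1, …`) be
multipliers of cycles with `0 < |μ j| < ∏_{k<j} |μ k|` for every `j` (for
`j = 0` this reads `|μ 0| < 1`).  Then for any strictly increasing tuple of
indices `i₀ < i₁ < … < i_s` and any signs `ε t ∈ {1, -1}`, the relation
`μ(i₀)^{ε₀} ⋯ μ(i_{s-1})^{ε_{s-1}} = μ(i_s)` is impossible. -/
theorem multiplier_relation_impossible
    (μ : ℕ → ℂ)
    (hpos : ∀ j, 0 < ‖μ j‖)
    (hlt : ∀ j, ‖μ j‖ < ∏ k ∈ Finset.range j, ‖μ k‖)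
    (s : ℕ) (i : Fin (s + 1) → ℕ) (hi : StrictMono i)
    (ε : Fin s → ℤ) (hε : ∀ t, ε t = 1 ∨ ε t = -1) :
    ∏ t : Fin s, μ (i t.castSucc) ^ (ε t) ≠ μ (i (Fin.last s)) :=
  multiplier_relation_impossible_general μ hlt s i hi ε hε
end

section
/- Let D be a nonempty set, g₁, g₂ : D → D two injective maps with disjoint images (g₁(D) ∩ g₂(D) = ∅), and suppose every composition g_{w₁} ∘ ⋯ ∘ g_{w_m} (w_i ∈ {1,2}) has at least one fixed point in D. Let Σ ⊂ D be a finite subset. Then for every sufficiently large m there exists a word w ∈ {1,2}^m and a periodic orbit p₀, p₁, …, p_m = p₀ with p_{i+1} = g_{w_{i+1}}(p_i), such that no p_i lies in Σ. -/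
/-!
Injective maps with disjoint images make `(i, x) ↦ g i x` injective, hence also
`(w, x) ↦ g_w x` on words of a fixed length `m`, so a point is fixed by at most one word of
length `m`. A point `q` on the periodic orbit of a word `w` is fixed by a cyclic rotation of `w`,
so the words of length `m` whose orbit meets `Σ` are determined by a pair (point of `Σ`,
rotation `k < m`): there are at most `m · #Σ` of them, fewer than the `2 ^ m` words once `m` is
large.
-/

open Finset Function

namespace PeriodicOrbit

variable {ι D : Type*} (g : ι → D → D)

/-- `wordMap g [i₁, …, iₘ] = g iₘ ∘ ⋯ ∘ g i₁`: the first letter acts first. -/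
def wordMap (w : List ι) (x : D) : D :=
  w.foldl (fun x i => g i x) x

variable {g}

lemma wordMap_append (w w' : List ι) (x : D) :
    wordMap g (w ++ w') x = wordMap g w' (wordMap g w x) :=
  List.foldl_append

lemma wordMap_take_add_one {w : List ι} {k : ℕ} (hk : k < w.length) (x : D) :
    wordMap g (w.take (k + 1)) x = g w[k] (wordMap g (w.take k) x) := by
  rw [← List.take_concat_get' w k hk, wordMap_append]
  rfl

lemma wordMap_eq_foldr_reverse (w : List ι) (x : D) :
    wordMap g w x = w.reverse.foldr (fun i x => g i x) x :=
  List.foldr_reverse.symm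

lemma wordMap_rotate_wordMap_take {w : List ι} {x : D} (hx : wordMap g w x = x) {k : ℕ}
    (hk : k ≤ w.length) :
    wordMap g (w.rotate k) (wordMap g (w.take k) x) = wordMap g (w.take k) x := by
  rw [List.rotate_eq_drop_append_take hk, wordMap_append, ← wordMap_append (w.take k),
    List.take_append_drop, hx]

lemma eq_and_eq_of_wordMap_eq (hg : Injective (uncurry g)) {w w' : List ι}
    (hlen : w.length = w'.length) {x x' : D} (h : wordMap g w x = wordMap g w' x') :
    w = w' ∧ x = x' := by
  induction w generalizing w' x x' with
  | nil =>
    obtain rfl := List.length_eq_zero_iff.mp hlen.symm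
    exact ⟨rfl, h⟩
  | cons i w ih =>
    obtain _ | ⟨i', w'⟩ := w'
    · simp at hlen
    · obtain ⟨rfl, hgx⟩ := ih (Nat.succ.inj hlen) h
      obtain ⟨rfl, rfl⟩ := Prod.mk.inj (@hg (i, x) (i', x') hgx)
      exact ⟨rfl, rfl⟩

lemma eq_of_wordMap_eq_self (hg : Injective (uncurry g)) {w w' : List ι}
    (hlen : w.length = w'.length) {q : D} (h : wordMap g w q = q) (h' : wordMap g w' q = q) :
    w = w' :=
  (eq_and_eq_of_wordMap_eq hg hlen (h.trans h'.symm)).1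

lemma exists_word_orbit_disjoint [Fintype ι] (hg : Injective (uncurry g)) {m : ℕ}
    (p : List.Vector ι m → D) (hp : ∀ v, wordMap g v.toList (p v) = p v) (S : Finset D)
    (hcard : m * #S < Fintype.card ι ^ m) :
    ∃ v : List.Vector ι m, ∀ k < m, wordMap g (v.toList.take k) (p v) ∉ S := by
  classical
  by_contra! hbad
  let fixers : ℕ × D → Finset (List.Vector ι m) := fun kq =>
    univ.filter fun v => wordMap g (v.toList.rotate kq.1) kq.2 = kq.2
  have hcover : univ ⊆ (range m ×ˢ S).biUnion fixers := by
    intro v _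
    obtain ⟨k, hk, hS⟩ := hbad v
    refine mem_biUnion.mpr ⟨(k, _), mem_product.mpr ⟨mem_range.mpr hk, hS⟩, ?_⟩
    exact mem_filter.mpr ⟨mem_univ v, wordMap_rotate_wordMap_take (hp v) (by simp [hk.le])⟩
  have hfixers : ∀ kq ∈ range m ×ˢ S, #(fixers kq) ≤ 1 := by
    intro kq _
    refine card_le_one.mpr fun v hv v' hv' => List.Vector.toList_injective ?_
    simp only [fixers, mem_filter, mem_univ, true_and] at hv hv'
    exact List.rotate_injective kq.1 (eq_of_wordMap_eq_self hg (by simp) hv hv')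
  have := (card_le_card hcover).trans (card_biUnion_le_card_mul _ _ 1 hfixers)
  simp only [card_univ, card_vector, card_product, card_range, mul_one] at this
  omega

end PeriodicOrbit

lemma mul_lt_two_pow_of_le {c m : ℕ} (hm : 2 * (c + 1) ≤ m) : m * c < 2 ^ m := by
  induction m, hm using Nat.le_induction with
  | base =>
    have : c + 1 ≤ 2 ^ c := Nat.lt_two_pow_self
    rw [show 2 * (c + 1) = c + c + 2 by ring, pow_add, pow_add]
    nlinarith
  | succ m hm ih =>
    have : m < 2 ^ m := Nat.lt_two_pow_self
    rw [pow_succ]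
    nlinarith

lemma injective_uncurry_of_inter_range_eq_empty {D : Type*} {g : Fin 2 → D → D}
    (hinj : ∀ i, Injective (g i)) (hdisj : Set.range (g 0) ∩ Set.range (g 1) = ∅) :
    Injective (uncurry g) := by
  rintro ⟨i, x⟩ ⟨j, y⟩ h
  obtain rfl | hij := eq_or_ne i j
  · exact congrArg _ (hinj i h)
  · have hx : g i x ∈ Set.range (g i) ∩ Set.range (g j) := ⟨⟨x, rfl⟩, y, h.symm⟩
    fin_cases i <;> fin_cases j <;> simp_all [Set.inter_comm]

open PeriodicOrbit in
/-- combinatorial core of Lemma 10: let `g 0, g 1 : D → D` be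
injective with disjoint images, such that every nonempty composition
`g w₁ ∘ ⋯ ∘ g w_m` has a fixed point.  Then for every finite `Σ ⊂ D` and every
sufficiently large `m` there is a word `w` of length `m` and a periodic orbit
`p 0, p 1, …, p m = p 0` with `p (i+1) = g (w i) (p i)` avoiding `Σ`. -/
theorem periodic_orbit_avoiding_finite_set
    (D : Type*) (g : Fin 2 → D → D)
    (hinj : ∀ i, Function.Injective (g i))
    (hdisj : Set.range (g 0) ∩ Set.range (g 1) = ∅)
    (hfix : ∀ w : List (Fin 2), w ≠ [] →
      ∃ p : D, w.foldr (fun i x => g i x) p = p)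
    (Sig : Finset D) :
    ∃ M : ℕ, ∀ m ≥ M, ∃ w : ℕ → Fin 2, ∃ p : ℕ → D,
      1 ≤ m ∧
      (∀ i < m, p (i + 1) = g (w i) (p i)) ∧
      p m = p 0 ∧
      ∀ i ≤ m, p i ∉ Sig := by
  refine ⟨2 * (Sig.card + 1), fun m hm => ?_⟩
  have hm₀ : 0 < m := by omega
  have hfixWord (v : List.Vector (Fin 2) m) : ∃ p, wordMap g v.toList p = p := by
    simpa [wordMap_eq_foldr_reverse] using
      hfix v.toList.reverse (by simp [← List.length_pos_iff, hm₀])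
  choose p hp using hfixWord
  obtain ⟨v, hv⟩ := exists_word_orbit_disjoint
    (injective_uncurry_of_inter_range_eq_empty hinj hdisj) p hp Sig
    (by simpa using mul_lt_two_pow_of_le hm)
  have hperiod : wordMap g (v.toList.take m) (p v) = wordMap g (v.toList.take 0) (p v) := by
    rw [List.take_of_length_le v.toList_length.le]
    exact hp v
  refine ⟨fun i => v.toList.getD i 0, fun i => wordMap g (v.toList.take i) (p v), hm₀, ?_,
    hperiod, fun i hi => ?_⟩
  · intro i hi
    have hi' : i < v.toList.length := by simpa using hi
    simp only [wordMap_take_add_one hi', List.getD_eq_getElem _ _ hi']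
  · obtain rfl | hi := hi.eq_or_lt
    · simpa only [hperiod] using hv 0 hm₀
    · exact hv i hi
end
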